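/- arXiv:2009.08452 — 3 statements merged into one kernel-verified Lean document; each statement's English description precedes it below -/
import Mathlib

section
/- Monotonicity of the adjusted chi-squared statistic: let t > 1, and let a, s, â, ŝ, ν, N be nonnegative reals with s > 0, ŝ ≥ s, â ≤ a + ν·N, and suppose â - ν·N ≥ ŝ/t and a ≥ s/t (the observed count exceeds the expected count in both true and adjusted versions). Then (â - ν·N - ŝ/t)² · t²/(ŝ·(t-1)) ≤ (a - s/t)² · t²/(s·(t-1)). -/
/-! Subtracting the CMS error from `â` and using `ŝ ≥ s` both shrink the excess of the observed
count over the expected one, and `ŝ ≥ s` also enlarges the denominator, so the adjusted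
statistic can only be smaller. -/

theorem sq_mul_div_le_sq_mul_div {x y c d d' : ℝ} (hx : 0 ≤ x) (hxy : x ≤ y) (hc : 0 ≤ c)
    (hd : 0 < d) (hdd' : d ≤ d') : x ^ 2 * c / d' ≤ y ^ 2 * c / d :=
  div_le_div₀ (by positivity) (by gcongr) hd hdd'

theorem adjusted_chi_squared_monotone_general
    (t a s ahat shat ν N : ℝ)
    (ht : 1 < t) (hs : 0 < s)
    (hshat : s ≤ shat) (hcms : ahat ≤ a + ν * N)
    (hadj : shat / t ≤ ahat - ν * N) :
    (ahat - ν * N - shat / t) ^ 2 * t ^ 2 / (shat * (t - 1))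
      ≤ (a - s / t) ^ 2 * t ^ 2 / (s * (t - 1)) := by
  have ht₀ : 0 < t := one_pos.trans ht
  have hexpected : s / t ≤ shat / t := by gcongr
  have hexcess : ahat - ν * N - shat / t ≤ a - s / t := by linarith
  exact sq_mul_div_le_sq_mul_div (sub_nonneg.2 hadj) hexcess (sq_nonneg t)
    (mul_pos hs (sub_pos.2 ht)) (mul_le_mul_of_nonneg_right hshat (sub_nonneg.2 ht.le))

theorem adjusted_chi_squared_monotone
    (t a s ahat shat ν N : ℝ)
    (ht : 1 < t) (ha : 0 ≤ a) (hs : 0 < s) (hahat : 0 ≤ ahat) (hν : 0 ≤ ν) (hN : 0 ≤ N)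
    (hshat : s ≤ shat) (hcms : ahat ≤ a + ν * N)
    (hadj : shat / t ≤ ahat - ν * N) (htrue : s / t ≤ a) :
    (ahat - ν * N - shat / t) ^ 2 * t ^ 2 / (shat * (t - 1))
      ≤ (a - s / t) ^ 2 * t ^ 2 / (s * (t - 1)) :=
  adjusted_chi_squared_monotone_general t a s ahat shat ν N ht hs hshat hcms hadj
end

section
/- Count-min sketch row error bound in expectation: for a fixed item x and a fixed row i with a hash function h_i chosen uniformly at random from a pairwise-independent family into b buckets, E[C[i][h_i(x)]] ≤ c(x) + N/b, where N is the total number of arrivals and c(x) the true count of x. -/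
/-!
The bucket count is a sum of collision indicators, one per arrival. By linearity of expectation
its mean is the sum of the collision probabilities, which are at most 1 for the arrivals of `x`
and at most `1 / b` for all others.
-/

open MeasureTheory

namespace List

variable {α : Type*}

theorem cast_length_filter_eq_sum_map_ite (l : List α) (p : α → Bool) :
    ((l.filter p).length : ℝ) = (l.map fun a => if p a then (1 : ℝ) else 0).sum := by
  induction l with
  | nil => simp
  | cons a l ih => by_cases ha : p a <;> simp [ha, ih, add_comm]

theorem sum_map_le_count_mul_add_length_mul [DecidableEq α] (l : List α) (f : α → ℝ) (x : α)
    {A B : ℝ} (hx : f x ≤ A) (hB : 0 ≤ B) (hf : ∀ y, y ≠ x → f y ≤ B) :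
    (l.map f).sum ≤ l.count x * A + l.length * B := by
  induction l with
  | nil => simp
  | cons a l ih =>
    by_cases hax : a = x
    · subst hax
      simp only [map_cons, sum_cons, count_cons_self, length_cons]
      push_cast
      linarith
    · simp only [map_cons, sum_cons, count_cons_of_ne hax, length_cons]
      push_cast
      linarith [hf a hax]

end List

section

variable {Ω α : Type*} [MeasurableSpace Ω] {P : Measure Ω}

theorem integrable_list_sum_map (l : List α) {f : α → Ω → ℝ} (hf : ∀ a ∈ l, Integrable (f a) P) :
    Integrable (fun ω => (l.map (f · ω)).sum) P := by
  induction l with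
  | nil => simp
  | cons a l ih =>
    simp only [List.map_cons, List.sum_cons]
    exact (hf a (by simp)).add (ih fun b hb => hf b (by simp [hb]))

theorem integral_list_sum_map (l : List α) {f : α → Ω → ℝ} (hf : ∀ a ∈ l, Integrable (f a) P) :
    ∫ ω, (l.map (f · ω)).sum ∂P = (l.map fun a => ∫ ω, f a ω ∂P).sum := by
  induction l with
  | nil => simp
  | cons a l ih =>
    have hl : ∀ b ∈ l, Integrable (f b) P := fun b hb => hf b (by simp [hb])
    simp only [List.map_cons, List.sum_cons]
    rw [integral_add (hf a (by simp)) (integrable_list_sum_map l hl), ih hl]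

end

theorem cms_row_expected_error_general
    {Ω : Type*} [MeasurableSpace Ω] (P : Measure Ω) [IsProbabilityMeasure P]
    (I : Type*) [DecidableEq I] (b : ℕ)
    (h : Ω → I → Fin b) (x : I) (items : List I)
    (hmeas : ∀ y, MeasurableSet {ω | h ω y = h ω x})
    (hpair : ∀ y, y ≠ x → (P {ω | h ω y = h ω x}).toReal ≤ 1 / (b : ℝ)) :
    ∫ ω, ((items.filter (fun y => h ω y = h ω x)).length : ℝ) ∂P
      ≤ (items.count x : ℝ) + (items.length : ℝ) / (b : ℝ) := by
  calc ∫ ω, ((items.filter (fun y => h ω y = h ω x)).length : ℝ) ∂P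
      = ∫ ω, (items.map fun y => {ω | h ω y = h ω x}.indicator (1 : Ω → ℝ) ω).sum ∂P := by
        simp only [List.cast_length_filter_eq_sum_map_ite, decide_eq_true_eq, Set.indicator_apply,
          Set.mem_ofPred_eq, Pi.one_apply]
    _ = (items.map fun y => P.real {ω | h ω y = h ω x}).sum := by
        rw [integral_list_sum_map (f := fun y => {ω | h ω y = h ω x}.indicator 1) items
          fun y _ => (integrable_const 1).indicator (hmeas y)]
        simp only [integral_indicator_one (hmeas _)]
    _ ≤ items.count x * 1 + items.length * (1 / b) :=
        items.sum_map_le_count_mul_add_length_mul _ x measureReal_le_one (by positivity) hpair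
    _ = items.count x + items.length / b := by ring

theorem cms_row_expected_error
    {Ω : Type*} [MeasurableSpace Ω] (P : Measure Ω) [IsProbabilityMeasure P]
    (I : Type*) [DecidableEq I] (b : ℕ) (hb : 0 < b)
    (h : Ω → I → Fin b) (x : I) (items : List I)
    (hmeas : ∀ y, MeasurableSet {ω | h ω y = h ω x})
    (hpair : ∀ y, y ≠ x → (P {ω | h ω y = h ω x}).toReal ≤ 1 / (b : ℝ))
    (hint : Integrable (fun ω => ((items.filter (fun y => h ω y = h ω x)).length : ℝ)) P) :
    ∫ ω, ((items.filter (fun y => h ω y = h ω x)).length : ℝ) ∂P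
      ≤ (items.count x : ℝ) + (items.length : ℝ) / (b : ℝ) :=
  cms_row_expected_error_general P I b h x items hmeas hpair
end

section
/- Count-min sketch probabilistic guarantee: with w = ⌈ln(2/ε)⌉ independent hash rows, each with error probability at most 1/e of exceeding c(x) + ν·N (via Markov's inequality with b = ⌈e/ν⌉ buckets), the estimate ĉ(x) = min_i C[i][h_i(x)] satisfies P(ĉ(x) > c(x) + ν·N) ≤ ε/2. -/
/-! The minimum exceeds the threshold only if every row does, and by independence that happens
with probability at most `(1/e)^w ≤ exp (-log (2/ε)) = ε/2`. -/

open MeasureTheory ProbabilityTheory Real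
open scoped ENNReal

lemma setOf_lt_inf'_eq_iInter {Ω ι α : Type*} [LinearOrder α] [Fintype ι]
    (h : (Finset.univ : Finset ι).Nonempty) (a : α) (f : ι → Ω → α) :
    {ω | a < Finset.univ.inf' h (fun i => f i ω)} = ⋂ i, {ω | a < f i ω} := by
  ext ω
  simp [Finset.lt_inf'_iff]

lemma ProbabilityTheory.iIndepSet.measure_iInter_le_pow {Ω ι : Type*} [MeasurableSpace Ω]
    [Fintype ι] {μ : Measure Ω} {s : ι → Set Ω} (h : iIndepSet s μ) {p : ℝ≥0∞}
    (hp : ∀ i, μ (s i) ≤ p) :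
    μ (⋂ i, s i) ≤ p ^ Fintype.card ι :=
  calc μ (⋂ i, s i) = ∏ i, μ (s i) := by simpa using h.meas_biInter Finset.univ
    _ ≤ ∏ _i : ι, p := Finset.prod_le_prod' fun i _ => hp i
    _ = p ^ Fintype.card ι := by simp

lemma one_div_exp_one_pow_le {δ : ℝ} (hδ : 0 < δ) {n : ℕ} (hn : log δ⁻¹ ≤ n) :
    (1 / exp 1) ^ n ≤ δ :=
  calc (1 / exp 1) ^ n = exp (-n) := by rw [one_div, ← exp_neg, ← exp_nat_mul]; ring_nf
    _ ≤ exp (log δ) := exp_le_exp.2 (by rw [log_inv] at hn; linarith)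
    _ = δ := exp_log hδ

theorem cms_probabilistic_guarantee_general
    {Ω : Type*} [MeasurableSpace Ω] (P : Measure Ω) [IsProbabilityMeasure P]
    (w : ℕ) (hw0 : 0 < w) (rows : Fin w → Ω → ℝ) (cx ν N ε : ℝ)
    (hε : ε ∈ Set.Ioo (0 : ℝ) 2) (hw : Real.log (2 / ε) ≤ (w : ℝ))
    (hindep : iIndepSet (fun i : Fin w => {ω | cx + ν * N < rows i ω}) P)
    (hrow : ∀ i, P {ω | cx + ν * N < rows i ω} ≤ ENNReal.ofReal (1 / Real.exp 1)) :
    P {ω | cx + ν * N <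
        Finset.univ.inf' ⟨⟨0, hw0⟩, Finset.mem_univ _⟩ (fun i => rows i ω)}
      ≤ ENNReal.ofReal (ε / 2) := by
  have hε0 : 0 < ε / 2 := by linarith [hε.1]
  calc _ = P (⋂ i, {ω | cx + ν * N < rows i ω}) := congrArg P (setOf_lt_inf'_eq_iInter _ _ _)
    _ ≤ ENNReal.ofReal (1 / exp 1) ^ w := by
        simpa using hindep.measure_iInter_le_pow hrow
    _ = ENNReal.ofReal ((1 / exp 1) ^ w) := (ENNReal.ofReal_pow (by positivity) w).symm
    _ ≤ ENNReal.ofReal (ε / 2) :=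
        ENNReal.ofReal_le_ofReal (one_div_exp_one_pow_le hε0 (by rwa [inv_div]))

theorem cms_probabilistic_guarantee
    {Ω : Type*} [MeasurableSpace Ω] (P : Measure Ω) [IsProbabilityMeasure P]
    (w : ℕ) (hw0 : 0 < w) (rows : Fin w → Ω → ℝ) (cx ν N ε : ℝ)
    (hε : ε ∈ Set.Ioo (0 : ℝ) 2) (hw : Real.log (2 / ε) ≤ (w : ℝ))
    (hmeas : ∀ i, MeasurableSet {ω | cx + ν * N < rows i ω})
    (hindep : iIndepSet (fun i : Fin w => {ω | cx + ν * N < rows i ω}) P)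
    (hrow : ∀ i, P {ω | cx + ν * N < rows i ω} ≤ ENNReal.ofReal (1 / Real.exp 1)) :
    P {ω | cx + ν * N <
        Finset.univ.inf' ⟨⟨0, hw0⟩, Finset.mem_univ _⟩ (fun i => rows i ω)}
      ≤ ENNReal.ofReal (ε / 2) :=
  cms_probabilistic_guarantee_general P w hw0 rows cx ν N ε hε hw hindep hrow
end
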